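/- Let R(ε) be the RCM family from the LATE example. Then R(ε) satisfies outcome decomposition (Y_x(u) = Y_{Z=1,x}(u) for all u, x) if and only if ε = 0. -/
import Mathlib


open scoped Classical

/-- An intervention: a partial assignment of values to variables. -/
def Itv (V : Type*) (Val : V → Type*) := ∀ v, Option (Val v)

/-- A potential outcome `Y_x`: an outcome variable together with an intervention. -/
structure PO (V : Type*) (Val : V → Type*) where
  Y : V
  x : Itv V Val

/-- A Rubin causal model (with a probability distribution on its units). -/
structure RCM (U : Type*) (V : Type*) (Val : V → Type*) where
  O : Set (PO V Val)
  F : (o : PO V Val) → U → Val o.Y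
  P : U → ℝ
  P_nonneg : ∀ u, 0 ≤ P u
  P_sum : ∑ᶠ u, P u = 1

/-- Joint valuations ("counterfactuals") of a set of potential outcomes. -/
def CFVal {V : Type*} {Val : V → Type*} (O : Set (PO V Val)) :=
  (o : O) → Val o.1.Y

/-- The (pushforward) counterfactual distribution of an RCM, computed on a set
of potential outcomes. -/
noncomputable def RCM.cfOn {U V : Type*} {Val : V → Type*} (R : RCM U V Val)
    (O : Set (PO V Val)) (g : CFVal O) : ℝ :=
  ∑ᶠ u, if ∀ o : O, R.F o.1 u = g o then R.P u else 0

/-- The counterfactual distribution of an RCM on its own defined outcomes. -/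
noncomputable def RCM.cf {U V : Type*} {Val : V → Type*} (R : RCM U V Val)
    (g : CFVal R.O) : ℝ := R.cfOn R.O g

/-- Effectiveness: intervened variables take their intervened values. -/
def RCM.Effective {U V : Type*} {Val : V → Type*} (R : RCM U V Val) : Prop :=
  ∀ o, o ∈ R.O → ∀ u, ∀ y : Val o.Y, o.x o.Y = some y → R.F o u = y

/-- Update an intervention at one variable. -/
noncomputable def upd {V : Type*} {Val : V → Type*} (x : Itv V Val) (Y : V) (y : Val Y) :
    Itv V Val :=
  fun v => if h : v = Y then some (cast (congrArg Val h.symm) y) else x v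

/-- Composition, at every unit, whenever the relevant outcomes are defined. -/
def RCM.Composition {U V : Type*} {Val : V → Type*} (R : RCM U V Val) : Prop :=
  ∀ (u : U) (Y Z : V) (w : Itv V Val),
    (⟨Y, w⟩ : PO V Val) ∈ R.O → (⟨Z, w⟩ : PO V Val) ∈ R.O →
    (⟨Z, upd w Y (R.F ⟨Y, w⟩ u)⟩ : PO V Val) ∈ R.O →
    R.F ⟨Z, upd w Y (R.F ⟨Y, w⟩ u)⟩ u = R.F ⟨Z, w⟩ u

/-- Reversibility, at every unit, whenever the relevant outcomes are defined. -/
def RCM.Reversibility {U V : Type*} {Val : V → Type*} (R : RCM U V Val) : Prop :=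
  ∀ (u : U) (Y Z : V) (w : Itv V Val) (y : Val Y) (z : Val Z), Y ≠ Z →
    (⟨Y, upd w Z z⟩ : PO V Val) ∈ R.O → (⟨Z, upd w Y y⟩ : PO V Val) ∈ R.O →
    (⟨Y, w⟩ : PO V Val) ∈ R.O →
    R.F ⟨Y, upd w Z z⟩ u = y → R.F ⟨Z, upd w Y y⟩ u = z →
    R.F ⟨Y, w⟩ u = y

/-- A structural causal model. -/
structure SCM (Uex : Type*) (V : Type*) (Val : V → Type*) where
  Pa : V → Set V
  Pa_irr : ∀ v, v ∉ Pa v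
  f : (v : V) → ((w : V) → Val w) → Uex → Val v
  f_dep : ∀ v a b u, (∀ w ∈ Pa v, a w = b w) → f v a u = f v b u
  P : Uex → ℝ
  P_nonneg : ∀ u, 0 ≤ P u
  P_sum : ∑ᶠ u, P u = 1

/-- `s` solves the manipulated model `M_x` under exogenous setting `u`. -/
def SCM.IsSol {Uex V : Type*} {Val : V → Type*} (M : SCM Uex V Val)
    (x : Itv V Val) (u : Uex) (s : ∀ w, Val w) : Prop :=
  ∀ w, s w = (x w).getD (M.f w s u)

/-- `M` has a unique solution under every intervention and exogenous setting. -/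
def SCM.Uniq {Uex V : Type*} {Val : V → Type*} (M : SCM Uex V Val) : Prop :=
  ∀ (x : Itv V Val) (u : Uex), ∃! s, M.IsSol x u s

/-- The potential outcome `Y_x(u)` of an SCM with unique solutions. -/
noncomputable def SCM.po {Uex V : Type*} {Val : V → Type*} (M : SCM Uex V Val)
    (h : M.Uniq) (o : PO V Val) (u : Uex) : Val o.Y :=
  (h o.x u).exists.choose o.Y

/-- The counterfactual distribution of an SCM on a set of potential outcomes. -/
noncomputable def SCM.cf {Uex V : Type*} {Val : V → Type*} (M : SCM Uex V Val)
    (h : M.Uniq) (O : Set (PO V Val)) (g : CFVal O) : ℝ :=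
  ∑ᶠ u, if ∀ o : O, M.po h o.1 u = g o then M.P u else 0

/-- `M` represents `R`: the counterfactual distribution of `M` marginalizes to
that of `R` on the outcomes defined by `R`. -/
def Represents {Uex U V : Type*} {Val : V → Type*} (M : SCM Uex V Val) (h : M.Uniq)
    (R : RCM U V Val) : Prop :=
  ∀ g : CFVal R.O, M.cf h R.O g = R.cf g

/-- `R` is representable by some SCM with unique solutions. -/
def RCM.Representable {U V : Type*} {Val : V → Type*} (R : RCM U V Val) : Prop :=
  ∃ (Uex : Type) (M : SCM Uex V Val) (h : M.Uniq), Finite Uex ∧ Represents M h R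

/-- `R'` extends `R`. -/
def RCM.Extends {U V : Type*} {Val : V → Type*} (R' R : RCM U V Val) : Prop :=
  R.O ⊆ R'.O ∧ (∀ o ∈ R.O, R'.F o = R.F o) ∧ R'.P = R.P

/-- A full RCM defines every potential outcome. -/
def RCM.Full {U V : Type*} {Val : V → Type*} (R : RCM U V Val) : Prop :=
  R.O = Set.univ

/-- `R'` is a submodel of `R`. -/
def Submodel {U V : Type*} {Val : V → Type*} (R' R : RCM U V Val) : Prop :=
  R'.O ⊆ R.O ∧ (∀ o ∈ R'.O, R'.F o = R.F o) ∧ R'.P = R.P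

/- LATE setting: variables `Fin 3` (`0 = Z` the assignment, `1 = X` the
treatment, `2 = Y` the outcome), all binary. -/

/-- The empty intervention. -/
def e3 : Itv (Fin 3) (fun _ => Fin 2) := fun _ => none

/-- Intervention `Z = z`. -/
noncomputable def iZ (z : Fin 2) : Itv (Fin 3) (fun _ => Fin 2) := upd e3 0 z

/-- Intervention `X = x`. -/
noncomputable def iX (x : Fin 2) : Itv (Fin 3) (fun _ => Fin 2) := upd e3 1 x

/-- Intervention `Z = z, X = x`. -/
noncomputable def iZX (z x : Fin 2) : Itv (Fin 3) (fun _ => Fin 2) := upd (iZ z) 1 x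

/-- The potential outcome `X_z(u)`. -/
noncomputable def XF {U : Type*} (R : RCM U (Fin 3) (fun _ => Fin 2)) (z : Fin 2)
    (u : U) : Fin 2 := R.F ⟨1, iZ z⟩ u

/-- The potential outcome `Y_x(u)`. -/
noncomputable def YX {U : Type*} (R : RCM U (Fin 3) (fun _ => Fin 2)) (x : Fin 2)
    (u : U) : Fin 2 := R.F ⟨2, iX x⟩ u

/-- The potential outcome `Y_{z,x}(u)`. -/
noncomputable def YZX {U : Type*} (R : RCM U (Fin 3) (fun _ => Fin 2)) (z x : Fin 2)
    (u : U) : Fin 2 := R.F ⟨2, iZX z x⟩ u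

/-- The potential outcome `Y_z(u)`. -/
noncomputable def YZ {U : Type*} (R : RCM U (Fin 3) (fun _ => Fin 2)) (z : Fin 2)
    (u : U) : Fin 2 := R.F ⟨2, iZ z⟩ u

/-- The local average treatment effect
`E(Y_{X=1} − Y_{X=0} | X_{Z=1} = 1 ∧ X_{Z=0} = 0)`. -/
noncomputable def LATE {U : Type*} (R : RCM U (Fin 3) (fun _ => Fin 2)) : ℝ :=
  (∑ᶠ u, if XF R 1 u = 1 ∧ XF R 0 u = 0 then
      R.P u * (((YX R 1 u).val : ℝ) - ((YX R 0 u).val : ℝ)) else 0) /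
  (∑ᶠ u, if XF R 1 u = 1 ∧ XF R 0 u = 0 then R.P u else 0)

/-- `ITT₂ = E(X_{Z=1} − X_{Z=0})`. -/
noncomputable def ITT2 {U : Type*} (R : RCM U (Fin 3) (fun _ => Fin 2)) : ℝ :=
  ∑ᶠ u, R.P u * (((XF R 1 u).val : ℝ) - ((XF R 0 u).val : ℝ))

/-- `ITT₁ = E(Y_{Z=1, X_{Z=1}} − Y_{Z=0, X_{Z=0}})`. -/
noncomputable def ITT1 {U : Type*} (R : RCM U (Fin 3) (fun _ => Fin 2)) : ℝ :=
  ∑ᶠ u, R.P u *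
    (((YZX R 1 (XF R 1 u) u).val : ℝ) - ((YZX R 0 (XF R 0 u) u).val : ℝ))

/-- The RCM `R(ε)` of the LATE example satisfies outcome decomposition (on its
probability-carrying units) if and only if `ε = 0`. -/
theorem stmt16 (ε : ℝ) (h0 : 0 ≤ ε) (h4 : ε ≤ 1 / 4)
    (R : RCM (Fin 4) (Fin 3) (fun _ => Fin 2))
    (hP : R.P = ![3 / 4 - ε, 1 / 4 - ε, ε, ε])
    (hX1 : ∀ u, XF R 1 u = 1) (hX0 : ∀ u, XF R 0 u = 0)
    (hY1 : ∀ (u : Fin 4) (z : Fin 2), YZX R z 1 u = ![1, 0, 0, 1] u)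
    (hY0 : ∀ (u : Fin 4) (z : Fin 2), YZX R z 0 u = ![0, 1, 0, 1] u)
    (hYX1 : ∀ u : Fin 4, YX R 1 u = ![1, 0, 1, 1] u)
    (hYX0 : ∀ u : Fin 4, YX R 0 u = ![0, 1, 0, 1] u) :
    (∀ u : Fin 4, 0 < R.P u → ∀ x, YX R x u = YZX R 1 x u) ↔ ε = 0 := by
  constructor
  · intro h
    by_contra hne
    have hpos : 0 < ε := lt_of_le_of_ne h0 (Ne.symm hne)
    have hp2 : 0 < R.P 2 := by rw [hP]; simpa using hpos
    have := h 2 hp2 1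
    rw [hYX1 2, hY1 2 1] at this
    simp at this
  · intro he u hu x
    rw [hP] at hu
    have hu' : u = 0 ∨ u = 1 := by
      fin_cases u <;> simp_all <;> linarith
    have hx : x = 0 ∨ x = 1 := by fin_cases x <;> simp
    rcases hu' with rfl | rfl <;> rcases hx with rfl | rfl <;>
      simp [hYX0, hYX1, hY0, hY1]
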